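/- For integers n, m, i, d with 0 ≤ i ≤ m ≤ n, define α_i(n,m,d) := ∑_{s=i}^{n+m} (-1)^s (m+n+1-s) · [∑_{k=0}^{s-i} C(n+2,k)·(-d)^{s-i-k}] · C(m+n-s, n-s+i), with the convention C(a,b) = 0 whenever b < 0 or b > a. Then for any integers c_0, c_1, …, c_m, any integer d, and all n ≥ m, one has ∑_{i=0}^m α_i(n,m,d)·c_i = (d-1)^{n-m} · ∑_{i=0}^m α_i(m,m,d)·c_i. (Taking c_i to be the degrees of the Chern–Mather classes of an m-dimensional projective variety X, this says the zeroth polar class satisfies δ_0(X × Y_n) = (d-1)^{n-m}·δ_0(X × Y_m) for smooth degree-d hypersurfaces Y_n ⊂ ℙ^{n+1}.) -/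

import Mathlib

open Finset

/-- The binomial coefficient `C(a,b)` for integers, with the convention that
`C(a,b) = 0` whenever `b < 0` or `b > a`. -/
def intChoose (a b : ℤ) : ℤ :=
  if 0 ≤ b ∧ b ≤ a then (a.toNat.choose b.toNat : ℤ) else 0

/-- The coefficient `α_i(n,m,d)` expressing the zeroth polar class of `X × Y_n` in terms of
the degrees of the Chern–Mather classes of `X`. -/
def alphaCoeff (n m i : ℕ) (d : ℤ) : ℤ :=
  ∑ s ∈ Finset.Icc i (n + m),
    (-1 : ℤ) ^ s * ((m : ℤ) + n + 1 - s) *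
      (∑ k ∈ Finset.range (s - i + 1), intChoose ((n : ℤ) + 2) k * (-d) ^ (s - i - k)) *
      intChoose ((m : ℤ) + n - s) ((n : ℤ) - s + i)

/-! With `t = m - i` and `l = n - s + i`, the inner sum of `α_i(n,m,d)` is `(-1)^(s-i)` times
the coefficient of `x^(s-i)` in `(1-x)^(n+2)/(1-dx)`, and
`(m+n+1-s)·C(m+n-s, l) = (t+1)·C(t+1+l, t+1)` is `t+1` times the coefficient of `x^l` in
`(1-x)^(-(t+2))`. So `α_i(n,m,d)` is `(-1)^i (t+1)` times the coefficient of `x^n` in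
`(1-x)^(n-t)/(1-dx)`, which is `d^t (d-1)^(n-t)`. Hence `α_i(n,m,d) = (d-1)^(n-m) α_i(m,m,d)`
for each `i` separately. -/

open PowerSeries

namespace PowerSeries

variable {R : Type*}

theorem coeff_one_add_X_pow [Semiring R] (a k : ℕ) :
    coeff k ((1 + X : R⟦X⟧) ^ a) = a.choose k := by
  rw [← Polynomial.coe_X, ← Polynomial.coe_one, ← Polynomial.coe_add, ← Polynomial.coe_pow,
    Polynomial.coeff_coe, Polynomial.coeff_one_add_X_pow]

theorem coeff_one_add_X_pow_mul_mk_pow [Semiring R] (a j : ℕ) (c : R) :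
    coeff j ((1 + X) ^ a * mk (c ^ ·)) =
      ∑ k ∈ range (j + 1), (a.choose k : R) * c ^ (j - k) := by
  simp only [coeff_mul, coeff_one_add_X_pow, coeff_mk,
    Nat.sum_antidiagonal_eq_sum_range_succ fun k l => (a.choose k : R) * c ^ l]

theorem rescale_neg_one_one_add_X_pow_mul_mk_pow [CommRing R] (a : ℕ) (c : R) :
    rescale (-1) ((1 + X) ^ a * mk ((-c) ^ ·)) = (1 - X) ^ a * mk (c ^ ·) := by
  simp [rescale_X, rescale_mk, ← mul_pow, sub_eq_add_neg]

theorem coeff_one_sub_X_pow_mul_mk_pow_of_le [CommRing R] (c : R) {a j : ℕ} (h : a ≤ j) :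
    coeff j ((1 - X) ^ a * mk (c ^ ·)) = c ^ (j - a) * (c - 1) ^ a := by
  induction a generalizing j with
  | zero => simp
  | succ a ih =>
    obtain ⟨j, rfl⟩ := Nat.exists_eq_add_one_of_ne_zero (by omega : j ≠ 0)
    have hrec : coeff (j + 1) ((1 - X) ^ (a + 1) * mk (c ^ ·))
        = coeff (j + 1) ((1 - X) ^ a * mk (c ^ ·)) - coeff j ((1 - X) ^ a * mk (c ^ ·)) := by
      rw [pow_succ', mul_assoc, sub_mul, one_mul, map_sub, coeff_succ_X_mul]
    rw [hrec, ih (by omega), ih (by omega), show j + 1 - a = (j - a) + 1 by omega,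
      show j + 1 - (a + 1) = j - a by omega]
    ring

end PowerSeries

theorem intChoose_natCast (a b : ℕ) : intChoose a b = a.choose b := by
  by_cases h : b ≤ a
  · simp [intChoose, h]
  · simp [intChoose, Nat.choose_eq_zero_of_lt (not_le.mp h), h]

theorem intChoose_of_neg (a : ℤ) {b : ℤ} (hb : b < 0) : intChoose a b = 0 :=
  if_neg fun h => hb.not_ge h.1

theorem sum_intChoose_mul_neg_pow (a j : ℕ) (d : ℤ) :
    ∑ k ∈ range (j + 1), intChoose (a : ℤ) k * (-d) ^ (j - k)
      = (-1) ^ j * coeff j ((1 - X : ℤ⟦X⟧) ^ a * PowerSeries.mk (d ^ ·)) := by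
  rw [← rescale_neg_one_one_add_X_pow_mul_mk_pow, coeff_rescale, ← mul_assoc, ← mul_pow,
    neg_one_mul, neg_neg, one_pow, one_mul, coeff_one_add_X_pow_mul_mk_pow]
  simp only [intChoose_natCast]

theorem Nat.add_add_one_mul_choose_right (t l : ℕ) :
    (t + l + 1) * (t + l).choose l = (t + 1) * (t + 1 + l).choose (t + 1) := by
  rw [← Nat.choose_symm_add, Nat.add_one_mul_choose_eq, add_right_comm, mul_comm]

theorem alphaCoeff_add_eq_coeff (n i t : ℕ) (d : ℤ) :
    alphaCoeff n (i + t) i d = (-1) ^ i * (t + 1) *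
      coeff n ((1 - X : ℤ⟦X⟧) ^ (n + 2) * PowerSeries.mk (d ^ ·) *
        PowerSeries.mk fun l => ((t + 1 + l).choose (t + 1) : ℤ)) := by
  rw [alphaCoeff, ← Finset.Ico_add_one_right_eq_Icc, sum_Ico_eq_sum_range,
    ← sum_subset (range_subset_range.2 (by omega : n + 1 ≤ n + (i + t) + 1 - i)), coeff_mul,
    Nat.sum_antidiagonal_eq_sum_range_succ fun j l => coeff j _ * coeff l _, mul_sum]
  swap
  · intro j _ hj
    rw [mem_range, not_lt] at hj
    rw [intChoose_of_neg _ (by push_cast; omega), mul_zero]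
  refine sum_congr rfl fun j hj => ?_
  obtain ⟨l, rfl⟩ := Nat.exists_eq_add_of_le (Nat.lt_succ_iff.mp (mem_range.mp hj))
  have hchoose : intChoose (((i + t : ℕ) : ℤ) + (j + l : ℕ) - (i + j : ℕ))
      (((j + l : ℕ) : ℤ) - (i + j : ℕ) + i) = (t + l).choose l := by
    rw [← intChoose_natCast]; congr 1 <;> push_cast <;> ring
  rw [Nat.add_sub_cancel_left, Nat.add_sub_cancel_left, coeff_mk, hchoose,
    show ((j + l : ℕ) : ℤ) + 2 = ((j + l + 2 : ℕ) : ℤ) by push_cast; ring,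
    sum_intChoose_mul_neg_pow]
  have hlin : ((i + t : ℕ) : ℤ) + (j + l : ℕ) + 1 - (i + j : ℕ) = t + l + 1 := by
    push_cast; ring
  have hsign : (-1 : ℤ) ^ (i + j) * (-1) ^ j = (-1) ^ i := by
    rw [← pow_add, add_assoc, pow_add, ← two_mul, pow_mul]; simp
  have hbinom := congrArg (Nat.cast (R := ℤ)) (Nat.add_add_one_mul_choose_right t l)
  push_cast at hbinom
  calc _ = ((-1) ^ (i + j) * (-1) ^ j) * ((t + l + 1) * ((t + l).choose l : ℤ)) *
        coeff j ((1 - X : ℤ⟦X⟧) ^ (j + l + 2) * PowerSeries.mk (d ^ ·)) := by rw [hlin]; ring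
    _ = _ := by rw [hsign, hbinom]; ring

theorem alphaCoeff_eq_of_le {n m i : ℕ} (d : ℤ) (him : i ≤ m) (hmn : m ≤ n) :
    alphaCoeff n m i d = (-1) ^ i * ((m - i : ℕ) + 1) * d ^ (m - i) * (d - 1) ^ (n - m + i) := by
  obtain ⟨t, rfl⟩ := Nat.exists_eq_add_of_le him
  have hcancel : (1 - X : ℤ⟦X⟧) ^ (n + 2) * PowerSeries.mk (d ^ ·) *
      PowerSeries.mk (fun l => ((t + 1 + l).choose (t + 1) : ℤ))
        = (1 - X) ^ (n - t) * PowerSeries.mk (d ^ ·) := by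
    rw [show n + 2 = (n - t) + (t + 1 + 1) by omega, pow_add]
    linear_combination ((1 - X : ℤ⟦X⟧) ^ (n - t) * PowerSeries.mk (d ^ ·)) *
      mk_add_choose_mul_one_sub_pow_eq_one ℤ (t + 1)
  rw [alphaCoeff_add_eq_coeff, hcancel, coeff_one_sub_X_pow_mul_mk_pow_of_le d (n.sub_le t),
    Nat.sub_sub_self (by omega), Nat.add_sub_cancel_left, show n - (i + t) + i = n - t by omega]
  ring

/-- **Stabilization of the zeroth polar class of `X × Y_n`.** For any integers
`c_0,…,c_m` (e.g. the degrees of the Chern–Mather classes of an `m`-dimensional projective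
variety `X`), any integer `d`, and all `n ≥ m`:
`∑_{i=0}^m α_i(n,m,d)·c_i = (d-1)^{n-m} · ∑_{i=0}^m α_i(m,m,d)·c_i`. -/
theorem polar_class_stabilization (n m : ℕ) (d : ℤ) (c : ℕ → ℤ) (hmn : m ≤ n) :
    ∑ i ∈ Finset.range (m + 1), alphaCoeff n m i d * c i
      = (d - 1) ^ (n - m) * ∑ i ∈ Finset.range (m + 1), alphaCoeff m m i d * c i := by
  rw [mul_sum]
  refine sum_congr rfl fun i hi => ?_
  have him : i ≤ m := Nat.lt_succ_iff.mp (mem_range.mp hi)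
  rw [alphaCoeff_eq_of_le d him hmn, alphaCoeff_eq_of_le d him le_rfl, Nat.sub_self, zero_add,
    pow_add]
  ring
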